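/- arXiv:1410.7250 — 4 statements merged into one kernel-verified Lean document; each statement's English description precedes it below -/
import Mathlib

section
/- Let (Ω, ν) be a σ-finite measure space with L²(Ω) separable, H a separable Hilbert space, and D a determining set for L¹(Ω). A closed subspace M ⊆ L²(Ω, H) is multiplicatively invariant with respect to D if and only if there exists a measurable range function J : Ω → {closed subspaces of H} such that M = {Φ ∈ L²(Ω, H) : Φ(ω) ∈ J(ω) for a.e. ω ∈ Ω}. -/
/-!
Take a countable dense sequence `Φₙ` in `M` (it exists because `L²(Ω, H)` is separable, being
topologically spanned by the products `h ⊗ c` with `h ∈ L²(Ω)`, `c ∈ H`), and let `J(ω)` be the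
closed span of the values `Φₙ(ω)`. Every element of `M` is an `L²`-limit of the `Φₙ`, hence an
a.e. limit of a subsequence, so it takes values in `J` a.e. Conversely, if `Φ` takes values in
`J` a.e., then `Ψ = Φ - P_M Φ` is orthogonal to `g Φₙ ∈ M` for every `g ∈ D`, i.e.
`∫ ⟪Ψ, Φₙ⟫ g = 0`; as `D` is determining, `Ψ(ω) ⊥ Φₙ(ω)` for all `n` and a.e. `ω`, and since
also `Ψ(ω) ∈ J(ω)`, `Ψ = 0`.
Measurability of `J` comes from Gram–Schmidt: the projection onto `J(ω)` is the pointwise limit of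
finite sums of rank-one projections onto the measurable Gram–Schmidt vectors of `(Φₙ(ω))ₙ`.
-/

open MeasureTheory Submodule Filter Topology TopologicalSpace InnerProductSpace
  ContinuousLinearMap

/-- A range function `J : Ω → {closed subspaces of E}` is measurable if for each `a ∈ E`
the map `ω ↦ P_{J(ω)} a` is measurable; the orthogonal projection `P_{J(ω)} a` is encoded
as the (unique) nearest point to `a` in the closed subspace `J(ω)`. -/
def IsMeasurableRangeFunction {Ω E : Type*} [MeasurableSpace Ω]
    [NormedAddCommGroup E] [InnerProductSpace ℂ E] (J : Ω → Submodule ℂ E) : Prop :=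
  (∀ ω, IsClosed (J ω : Set E)) ∧
  ∀ a : E, ∃ p : Ω → E, StronglyMeasurable p ∧
    ∀ ω, p ω ∈ J ω ∧ ∀ v ∈ J ω, ‖a - p ω‖ ≤ ‖a - v‖

/-- A set `M ⊆ L²(Ω, E)` is multiplicatively invariant with respect to `D ⊆ L^∞(Ω)`
if `Φ ∈ M` implies `gΦ ∈ M` for every `g ∈ D`. -/
def IsMISpace {Ω E : Type*} [MeasurableSpace Ω] [NormedAddCommGroup E]
    [InnerProductSpace ℂ E] (ν : Measure Ω) (D : Set (Ω → ℂ))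
    (M : Set (Lp E 2 ν)) : Prop :=
  ∀ Φ ∈ M, ∀ g ∈ D, ∀ Ψ : Lp E 2 ν, (⇑Ψ =ᵐ[ν] fun ω => g ω • (⇑Φ ω)) → Ψ ∈ M

section InnerProductSpace

variable {𝕜 E : Type*} [RCLike 𝕜] [NormedAddCommGroup E] [InnerProductSpace 𝕜 E]

local notation "⟪" x ", " y "⟫" => inner 𝕜 x y

theorem norm_sub_starProjection_le {K : Submodule 𝕜 E} [K.HasOrthogonalProjection] (a : E)
    {v : E} (hv : v ∈ K) : ‖a - K.starProjection a‖ ≤ ‖a - v‖ := by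
  rw [starProjection_minimal]
  exact ciInf_le ⟨0, Set.forall_mem_range.2 fun _ => norm_nonneg _⟩ (⟨v, hv⟩ : K)

theorem eq_zero_of_mem_closure_span_of_inner_eq_zero {ι : Type*} {v : ι → E} {z : E}
    (hz : z ∈ (span 𝕜 (Set.range v)).topologicalClosure) (hzv : ∀ i, ⟪z, v i⟫ = 0) :
    z = 0 := by
  have hle : (span 𝕜 (Set.range v)).topologicalClosure ≤ (𝕜 ∙ z)ᗮ := by
    refine topologicalClosure_minimal _ (span_le.2 ?_) (isClosed_orthogonal _)
    rintro _ ⟨i, rfl⟩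
    exact mem_orthogonal_singleton_iff_inner_right.2 (hzv i)
  exact inner_self_eq_zero.1 (mem_orthogonal_singleton_iff_inner_right.1 (hle hz))

theorem starProjection_span_eq_sum_of_orthogonal {ι : Type*} (s : Finset ι) {u : ι → E}
    (hu : Pairwise fun i j => ⟪u i, u j⟫ = 0)
    [(span 𝕜 (u '' s)).HasOrthogonalProjection] (a : E) :
    (span 𝕜 (u '' s)).starProjection a = ∑ i ∈ s, (𝕜 ∙ u i).starProjection a := by
  classical
  refine eq_starProjection_of_mem_of_inner_eq_zero
    (sum_mem fun i hi => span_mono (by simpa using Set.mem_image_of_mem u hi) (coe_mem _)) ?_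
  intro w hw
  induction hw using span_induction with
  | mem x hx =>
    obtain ⟨j, hj, rfl⟩ := hx
    have hproj : ∀ i ∈ s, ⟪(𝕜 ∙ u i).starProjection a, u j⟫ = if i = j then ⟪a, u j⟫ else 0 := by
      intro i _
      split_ifs with hij
      · rw [hij, inner_starProjection_left_eq_right,
          starProjection_eq_self_iff.2 (mem_span_singleton_self _)]
      · rw [starProjection_singleton, inner_smul_left, hu hij, mul_zero]
    rw [inner_sub_left, sum_inner, Finset.sum_congr rfl hproj, Finset.sum_ite_eq' s j,
      if_pos (Finset.mem_coe.1 hj), sub_self]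
  | zero => exact inner_zero_right _
  | add x y _ _ hx hy => rw [inner_add_right, hx, hy, add_zero]
  | smul c x _ hx => rw [inner_smul_right, hx, mul_zero]

theorem tendsto_sum_starProjection_gramSchmidt [CompleteSpace E] (v : ℕ → E) (a : E) :
    Tendsto (fun n => ∑ i ∈ Finset.range n, (𝕜 ∙ gramSchmidt 𝕜 v i).starProjection a) atTop
      (𝓝 ((span 𝕜 (Set.range v)).topologicalClosure.starProjection a)) := by
  set U : ℕ → Submodule 𝕜 E := fun n => span 𝕜 (gramSchmidt 𝕜 v '' Finset.range n)
  have hU : Monotone U := fun m n hmn =>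
    span_mono (Set.image_mono (Finset.coe_subset.2 (Finset.range_subset_range.2 hmn)))
  have hsup : ⨆ n, U n = span 𝕜 (Set.range v) := by
    rw [iSup_span, ← span_gramSchmidt 𝕜 v]
    congr 1
    ext x
    simp only [Set.mem_iUnion, Set.mem_image, Finset.coe_range, Set.mem_Iio, Set.mem_range]
    exact ⟨fun ⟨_, i, _, hi⟩ => ⟨i, hi⟩, fun ⟨i, hi⟩ => ⟨i + 1, i, i.lt_succ_self, hi⟩⟩
  have (n : ℕ) : (U n).HasOrthogonalProjection :=
    have := FiniteDimensional.span_of_finite 𝕜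
      ((Finset.range n).finite_toSet.image (gramSchmidt 𝕜 v))
    inferInstance
  have hlim := starProjection_tendsto_closure_iSup U hU a
  simp only [hsup] at hlim
  exact hlim.congr fun n =>
    starProjection_span_eq_sum_of_orthogonal _ (gramSchmidt_pairwise_orthogonal 𝕜 v) a

end InnerProductSpace

namespace MeasureTheory.StronglyMeasurable

variable {𝕜 E Ω : Type*} [RCLike 𝕜] [NormedAddCommGroup E] [InnerProductSpace 𝕜 E]
  [SecondCountableTopology E] [MeasurableSpace Ω]

theorem starProjection_span_singleton {f g : Ω → E}
    (hf : StronglyMeasurable f) (hg : StronglyMeasurable g) :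
    StronglyMeasurable fun ω => (𝕜 ∙ f ω).starProjection (g ω) := by
  borelize E
  simp_rw [starProjection_singleton]
  refine (Measurable.stronglyMeasurable ?_).smul hf
  exact (hf.measurable.inner hg.measurable).div
    (RCLike.continuous_ofReal.measurable.comp (hf.measurable.norm.pow_const 2))

theorem gramSchmidt {f : ℕ → Ω → E} (hf : ∀ n, StronglyMeasurable (f n)) (n : ℕ) :
    StronglyMeasurable fun ω => gramSchmidt 𝕜 (f · ω) n := by
  induction n using Nat.strong_induction_on with
  | _ n ih =>
    rw [funext fun ω => gramSchmidt_def 𝕜 (f · ω) n]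
    exact (hf n).sub (Finset.stronglyMeasurable_fun_sum _ fun i hi =>
      (ih i (Finset.mem_Iio.1 hi)).starProjection_span_singleton (hf n))

theorem starProjection_closure_span [CompleteSpace E] {f : ℕ → Ω → E}
    (hf : ∀ n, StronglyMeasurable (f n)) (a : E) :
    StronglyMeasurable fun ω =>
      (span 𝕜 (Set.range (f · ω))).topologicalClosure.starProjection a :=
  stronglyMeasurable_of_tendsto atTop
    (fun _ => Finset.stronglyMeasurable_fun_sum _ fun i _ =>
      (gramSchmidt hf i).starProjection_span_singleton stronglyMeasurable_const)
    (tendsto_pi_nhds.2 fun ω => tendsto_sum_starProjection_gramSchmidt (f · ω) a)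

end MeasureTheory.StronglyMeasurable

section Lp

variable {α 𝕜 E : Type*} [MeasurableSpace α] {μ : Measure α} {p : ENNReal}
  [NormedAddCommGroup E]

theorem toSpanSingleton_compLp_indicatorConstLp_one [NontriviallyNormedField 𝕜]
    [NormedSpace 𝕜 E] {s : Set α} (hs : MeasurableSet s) (hμs : μ s ≠ ⊤) (c : E) :
    (toSpanSingleton 𝕜 c).compLp (indicatorConstLp p hs hμs (1 : 𝕜)) =
      indicatorConstLp p hs hμs c := by
  ext1
  filter_upwards [indicatorConstLp_coeFn (p := p) (hs := hs) (hμs := hμs) (c := c),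
    indicatorConstLp_coeFn (p := p) (hs := hs) (hμs := hμs) (c := (1 : 𝕜)),
    (toSpanSingleton 𝕜 c).coeFn_compLp (indicatorConstLp p hs hμs (1 : 𝕜))] with x hc h1 hcomp
  rw [hc, hcomp, h1]
  by_cases hx : x ∈ s <;> simp [hx]

theorem Lp.separableSpace_of_separableSpace_scalar [Fact (1 ≤ p)] (hp : p ≠ ⊤) [RCLike 𝕜]
    [NormedSpace 𝕜 E] [SeparableSpace (Lp 𝕜 p μ)] [SeparableSpace E] :
    SeparableSpace (Lp E p μ) := by
  set B := compLpL₂ p μ (toSpanSingletonCLE : E ≃L[𝕜] 𝕜 →L[𝕜] E).toContinuousLinearMap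
  set S := Set.range fun q : E × Lp 𝕜 p μ => B q.1 q.2
  have hS : IsSeparable S := isSeparable_range B.isBoundedBilinearMap.continuous
  have hdense : ∀ f : Lp E p μ, f ∈ (span 𝕜 S).topologicalClosure := by
    refine Lp.induction hp _ (fun c s hs hμs => ?_) (fun _ _ _ _ _ hf hg => add_mem hf hg)
      (isClosed_topologicalClosure _)
    refine le_topologicalClosure _ (subset_span ⟨(c, indicatorConstLp p hs hμs.ne 1), ?_⟩)
    rw [Lp.simpleFunc.coe_indicatorConst]
    exact toSpanSingleton_compLp_indicatorConstLp_one hs hμs.ne c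
  rw [← isSeparable_univ_iff]
  exact hS.span.closure.mono fun f _ => hdense f

theorem Lp.ae_mem_of_mem_closure [Fact (1 ≤ p)] {K : α → Set E} (hK : ∀ x, IsClosed (K x))
    {S : Set (Lp E p μ)} (hS : ∀ Ψ ∈ S, ∀ᵐ x ∂μ, Ψ x ∈ K x) {Φ : Lp E p μ}
    (hΦ : Φ ∈ closure S) : ∀ᵐ x ∂μ, Φ x ∈ K x := by
  obtain ⟨Ψs, hΨsS, hlim⟩ := mem_closure_iff_seq_limit.1 hΦ
  obtain ⟨ns, -, hae⟩ := (tendstoInMeasure_of_tendsto_Lp hlim).exists_seq_tendsto_ae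
  filter_upwards [hae, ae_all_iff.2 fun n => hS _ (hΨsS n)] with x hx hK'
  exact (hK x).mem_of_tendsto hx (Eventually.of_forall fun i => hK' _)

end Lp

section MultiplicativelyInvariant

variable {Ω E : Type*} [MeasurableSpace Ω] {ν : Measure Ω} [NormedAddCommGroup E]
  [InnerProductSpace ℂ E] {D : Set (Ω → ℂ)}

def IsDeterminingSet (ν : Measure Ω) (D : Set (Ω → ℂ)) : Prop :=
  ∀ f : Ω → ℂ, Integrable f ν → (∀ g ∈ D, ∫ ω, f ω * g ω ∂ν = 0) → f =ᵐ[ν] 0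

theorem isMeasurableRangeFunction_closure_span [CompleteSpace E] [SecondCountableTopology E]
    {f : ℕ → Ω → E} (hf : ∀ n, StronglyMeasurable (f n)) :
    IsMeasurableRangeFunction fun ω => (span ℂ (Set.range (f · ω))).topologicalClosure :=
  ⟨fun _ => isClosed_topologicalClosure _, fun a =>
    ⟨_, StronglyMeasurable.starProjection_closure_span hf a, fun _ =>
      ⟨starProjection_apply_mem _ a, fun _ hv => norm_sub_starProjection_le a hv⟩⟩⟩

theorem isMISpace_of_forall_mem_iff_ae_mem {M : Set (Lp E 2 ν)} {J : Ω → Submodule ℂ E}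
    (hJ : ∀ Φ, Φ ∈ M ↔ ∀ᵐ ω ∂ν, Φ ω ∈ J ω) : IsMISpace ν D M := by
  intro Φ hΦ g _ Ψ hΨ
  refine (hJ Ψ).2 ?_
  filter_upwards [hΨ, (hJ Φ).1 hΦ] with ω hΨω hΦω
  exact hΨω ▸ (J ω).smul_mem _ hΦω

theorem ae_mem_closure_span_of_mem_closure {p : ENNReal} [Fact (1 ≤ p)] {Φs : ℕ → Lp E p ν}
    {f : ℕ → Ω → E} (hΦs : ∀ n, Φs n =ᵐ[ν] f n) {Φ : Lp E p ν} (hΦ : Φ ∈ closure (Set.range Φs)) :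
    ∀ᵐ ω ∂ν, Φ ω ∈ (span ℂ (Set.range (f · ω))).topologicalClosure := by
  refine Lp.ae_mem_of_mem_closure (fun _ => isClosed_topologicalClosure _) ?_ hΦ
  rintro _ ⟨n, rfl⟩
  filter_upwards [hΦs n] with ω hω
  exact hω ▸ le_topologicalClosure _ (subset_span ⟨n, rfl⟩)

variable {M : Submodule ℂ (Lp E 2 ν)}

theorem IsMISpace.ae_inner_eq_zero (hMI : IsMISpace ν D (M : Set (Lp E 2 ν)))
    (hDbdd : ∀ g ∈ D, MemLp g ⊤ ν) (hDdet : IsDeterminingSet ν D) {Ψ Φ : Lp E 2 ν}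
    (hΨ : Ψ ∈ Mᗮ) (hΦ : Φ ∈ M) :
    ∀ᵐ ω ∂ν, inner ℂ (Ψ ω) (Φ ω) = 0 := by
  refine hDdet _ (L2.integrable_inner Ψ Φ) fun g hg => ?_
  have hgΦ : MemLp (fun ω => g ω • Φ ω) 2 ν := (Lp.memLp Φ).smul (hDbdd g hg)
  have hgΦM : hgΦ.toLp _ ∈ M := hMI Φ hΦ g hg _ hgΦ.coeFn_toLp
  calc ∫ ω, inner ℂ (Ψ ω) (Φ ω) * g ω ∂ν = ∫ ω, inner ℂ (Ψ ω) (hgΦ.toLp _ ω) ∂ν := by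
        refine integral_congr_ae ?_
        filter_upwards [hgΦ.coeFn_toLp] with ω hω
        rw [hω, inner_smul_right, mul_comm]
    _ = inner ℂ Ψ (hgΦ.toLp _) := (L2.inner_def _ _).symm
    _ = 0 := (mem_orthogonal' _ _).1 hΨ _ hgΦM

theorem IsMISpace.mem_of_ae_mem_closure_span [CompleteSpace E]
    (hMI : IsMISpace ν D (M : Set (Lp E 2 ν)))
    (hDbdd : ∀ g ∈ D, MemLp g ⊤ ν) (hDdet : IsDeterminingSet ν D)
    (hM : IsClosed (M : Set (Lp E 2 ν))) {Φs : ℕ → Lp E 2 ν} (hΦsM : ∀ n, Φs n ∈ M)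
    (hMΦs : (M : Set (Lp E 2 ν)) ⊆ closure (Set.range Φs)) {f : ℕ → Ω → E}
    (hΦs : ∀ n, Φs n =ᵐ[ν] f n) {Φ : Lp E 2 ν}
    (hΦ : ∀ᵐ ω ∂ν, Φ ω ∈ (span ℂ (Set.range (f · ω))).topologicalClosure) : Φ ∈ M := by
  have : CompleteSpace M := hM.completeSpace_coe
  set Ψ := Φ - M.starProjection Φ
  have hΨ : Ψ ∈ Mᗮ := sub_starProjection_mem_orthogonal Φ
  have hPΦ := ae_mem_closure_span_of_mem_closure hΦs (hMΦs (starProjection_apply_mem M Φ))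
  have hΨf : ∀ᵐ ω ∂ν, ∀ n, inner ℂ (Ψ ω) (f n ω) = 0 := ae_all_iff.2 fun n => by
    filter_upwards [hMI.ae_inner_eq_zero hDbdd hDdet hΨ (hΦsM n), hΦs n] with ω hω hfω
    rwa [← hfω]
  have hΨ0 : Ψ = 0 := by
    refine Lp.ext ?_
    filter_upwards [Lp.coeFn_sub Φ (M.starProjection Φ), hΦ, hPΦ, hΨf, Lp.coeFn_zero E 2 ν]
      with ω hΨω hΦω hPΦω hΨfω h0
    rw [h0]
    refine eq_zero_of_mem_closure_span_of_inner_eq_zero ?_ hΨfω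
    rw [hΨω]
    exact sub_mem hΦω hPΦω
  rw [sub_eq_zero.1 hΨ0]
  exact starProjection_apply_mem M Φ

end MultiplicativelyInvariant

theorem mi_space_iff_range_function_general
    {Ω : Type*} [MeasurableSpace Ω] (ν : Measure Ω)
    {E : Type*} [NormedAddCommGroup E] [InnerProductSpace ℂ E] [CompleteSpace E]
    [SecondCountableTopology E]
    [TopologicalSpace.SeparableSpace (Lp ℂ 2 ν)]  -- L²(Ω) is separable
    (D : Set (Ω → ℂ))
    (hDbdd : ∀ g ∈ D, MemLp g ⊤ ν)
    (hDdet : ∀ f : Ω → ℂ, Integrable f ν →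
      (∀ g ∈ D, ∫ ω, f ω * g ω ∂ν = 0) → f =ᵐ[ν] 0)
    (M : Submodule ℂ (Lp E 2 ν)) (hM : IsClosed (M : Set (Lp E 2 ν))) :
    IsMISpace ν D (M : Set (Lp E 2 ν)) ↔
      ∃ J : Ω → Submodule ℂ E, IsMeasurableRangeFunction J ∧
        ∀ Φ : Lp E 2 ν, Φ ∈ M ↔ ∀ᵐ ω ∂ν, Φ ω ∈ J ω := by
  constructor
  · intro hMI
    have : SeparableSpace (Lp E 2 ν) :=
      Lp.separableSpace_of_separableSpace_scalar (𝕜 := ℂ) (by norm_num)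
    obtain ⟨t, htM, htc, hMt⟩ :=
      (IsSeparable.of_separableSpace (M : Set (Lp E 2 ν))).exists_countable_dense_subset
    obtain ⟨Φs, rfl⟩ := htc.exists_eq_range (closure_nonempty_iff.1 ⟨0, hMt M.zero_mem⟩)
    have hΦs (n : ℕ) := (Lp.aestronglyMeasurable (Φs n)).ae_eq_mk
    refine ⟨_, isMeasurableRangeFunction_closure_span
      fun n => (Lp.aestronglyMeasurable (Φs n)).stronglyMeasurable_mk, fun Φ =>
        ⟨fun hΦ => ae_mem_closure_span_of_mem_closure hΦs (hMt hΦ),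
          hMI.mem_of_ae_mem_closure_span hDbdd hDdet hM (fun n => htM ⟨n, rfl⟩) hMt hΦs⟩⟩
  · rintro ⟨J, -, hJ⟩
    exact isMISpace_of_forall_mem_iff_ae_mem hJ

/-- Bownik–Ross characterization of multiplicatively invariant subspaces of the Bochner
space `L²(Ω, H)` in terms of measurable range functions. -/
theorem mi_space_iff_range_function
    {Ω : Type*} [MeasurableSpace Ω] (ν : Measure Ω) [SigmaFinite ν]
    {E : Type*} [NormedAddCommGroup E] [InnerProductSpace ℂ E] [CompleteSpace E]
    [SecondCountableTopology E]
    [TopologicalSpace.SeparableSpace (Lp ℂ 2 ν)]  -- L²(Ω) is separable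
    (D : Set (Ω → ℂ))
    (hDbdd : ∀ g ∈ D, MemLp g ⊤ ν)
    (hDdet : ∀ f : Ω → ℂ, Integrable f ν →
      (∀ g ∈ D, ∫ ω, f ω * g ω ∂ν = 0) → f =ᵐ[ν] 0)
    (M : Submodule ℂ (Lp E 2 ν)) (hM : IsClosed (M : Set (Lp E 2 ν))) :
    IsMISpace ν D (M : Set (Lp E 2 ν)) ↔
      ∃ J : Ω → Submodule ℂ E, IsMeasurableRangeFunction J ∧
        ∀ Φ : Lp E 2 ν, Φ ∈ M ↔ ∀ᵐ ω ∂ν, Φ ω ∈ J ω :=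
  mi_space_iff_range_function_general ν D hDbdd hDdet M hM
end

section
/- Let V ⊆ L²(X) be a closed subspace, where σ is a quasi-Γ-invariant action of the countable discrete LCA group Γ on (X, μ) with tiling set C. Then V is (Γ, σ)-invariant (i.e. Π_σ(γ)V ⊆ V for all γ ∈ Γ) if and only if its image Z_σ[V] ⊆ L²(Γ̂, L²(C)) under the generalized Zak transform is multiplicatively invariant with respect to the determining set D = {X_γ}_{γ∈Γ}. -/
open MeasureTheory

section IntertwiningMultiplication

variable {Ω E α ι : Type*} [MeasurableSpace Ω] [NormedAddCommGroup E] [InnerProductSpace ℂ E]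
  {ν : Measure Ω} {Z : α → Lp E 2 ν} {χ : ι → Ω → ℂ} {T : ι → α → α}

theorem Lp.ae_eq_smul_iff_eq_of_intertwines
    (hZT : ∀ i a, ⇑(Z (T i a)) =ᵐ[ν] fun ω => χ i ω • (⇑(Z a) ω)) (i : ι) (a : α)
    (Ψ : Lp E 2 ν) :
    (⇑Ψ =ᵐ[ν] fun ω => χ i ω • (⇑(Z a) ω)) ↔ Ψ = Z (T i a) :=
  ⟨fun h => Lp.ext (h.trans (hZT i a).symm), fun h => h ▸ hZT i a⟩

theorem isMISpace_image_iff_forall_mem (hZ : Function.Injective Z)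
    (hZT : ∀ i a, ⇑(Z (T i a)) =ᵐ[ν] fun ω => χ i ω • (⇑(Z a) ω)) (V : Set α) :
    IsMISpace ν {g | ∃ i, g = χ i} (Z '' V) ↔ ∀ i, ∀ a ∈ V, T i a ∈ V := by
  simp only [IsMISpace, Set.forall_mem_image, Set.mem_ofPred_eq, forall_exists_index,
    forall_eq_apply_imp_iff, Lp.ae_eq_smul_iff_eq_of_intertwines hZT, forall_eq,
    hZ.mem_set_image]
  exact ⟨fun h i a ha => h ha i, fun h a ha i => h i a ha⟩

end IntertwiningMultiplication

theorem gamma_sigma_invariant_iff_MI_general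
    {X : Type*} [MeasurableSpace X] (μ : Measure X)
    (C : Set X)
    {Γ : Type*}
    -- the dual group Γ̂ with its normalized Haar measure and characters
    {Γh : Type*} [MeasurableSpace Γh] (mh : Measure Γh)
    (χ : Γ → Γh → ℂ)
    -- the unitary representation Π_σ of Γ on L²(X)
    (Pi : Γ → (Lp ℂ 2 μ ≃ₗᵢ[ℂ] Lp ℂ 2 μ))
    -- the generalized Zak transform: an isometric isomorphism intertwining Π_σ with
    -- multiplication by the characters
    (Z : Lp ℂ 2 μ ≃ₗᵢ[ℂ] Lp (Lp ℂ 2 (μ.restrict C)) 2 mh)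
    (hZPi : ∀ (γ : Γ) (f : Lp ℂ 2 μ),
      ⇑(Z (Pi γ f)) =ᵐ[mh] fun α => χ γ α • (⇑(Z f) α))
    -- a closed subspace of L²(X)
    (V : Submodule ℂ (Lp ℂ 2 μ)) :
    (∀ γ : Γ, ∀ f ∈ V, Pi γ f ∈ V) ↔
      IsMISpace mh {g | ∃ γ : Γ, g = χ γ} (⇑Z '' (V : Set (Lp ℂ 2 μ))) :=
  (isMISpace_image_iff_forall_mem (T := fun γ => Pi γ) Z.injective hZPi V).symm

/-- A closed subspace `V ⊆ L²(X)` is `(Γ,σ)`-invariant if and only if its image under the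
generalized Zak transform is a multiplicatively invariant subspace of `L²(Γ̂, L²(C))`
with respect to the determining set of characters `D = {X_γ}_{γ∈Γ}`. -/
theorem gamma_sigma_invariant_iff_MI
    {X : Type*} [MeasurableSpace X] (μ : Measure X) [SigmaFinite μ]
    (C : Set X) (hCmeas : MeasurableSet C)
    {Γ : Type*} [AddCommGroup Γ] [Countable Γ]
    -- the dual group Γ̂ with its normalized Haar measure and characters
    {Γh : Type*} [MeasurableSpace Γh] (mh : Measure Γh) [IsProbabilityMeasure mh]
    (χ : Γ → Γh → ℂ)
    (hχmeas : ∀ γ, Measurable (χ γ))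
    (hχadd : ∀ γ γ' α, χ (γ + γ') α = χ γ α * χ γ' α)
    (hχnorm : ∀ γ α, ‖χ γ α‖ = 1)
    (hχdet : ∀ f : Γh → ℂ, Integrable f mh →
      (∀ γ : Γ, ∫ α, f α * χ γ α ∂mh = 0) → f =ᵐ[mh] 0)
    -- the unitary representation Π_σ of Γ on L²(X)
    (Pi : Γ → (Lp ℂ 2 μ ≃ₗᵢ[ℂ] Lp ℂ 2 μ))
    (hPiadd : ∀ γ γ' (f : Lp ℂ 2 μ), Pi γ (Pi γ' f) = Pi (γ + γ') f)
    -- the generalized Zak transform: an isometric isomorphism intertwining Π_σ with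
    -- multiplication by the characters
    (Z : Lp ℂ 2 μ ≃ₗᵢ[ℂ] Lp (Lp ℂ 2 (μ.restrict C)) 2 mh)
    (hZPi : ∀ (γ : Γ) (f : Lp ℂ 2 μ),
      ⇑(Z (Pi γ f)) =ᵐ[mh] fun α => χ γ α • (⇑(Z f) α))
    -- a closed subspace of L²(X)
    (V : Submodule ℂ (Lp ℂ 2 μ)) (hV : IsClosed (V : Set (Lp ℂ 2 μ))) :
    (∀ γ : Γ, ∀ f ∈ V, Pi γ f ∈ V) ↔
      IsMISpace mh {g | ∃ γ : Γ, g = χ γ} (⇑Z '' (V : Set (Lp ℂ 2 μ))) :=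
  gamma_sigma_invariant_iff_MI_general μ C mh χ Pi Z hZPi V
end

section
/- Let M ⊆ L²(Ω, H) be a finitely generated multiplicatively invariant space with respect to a determining set D, with associated measurable range function J. Then the length of M, ℓ(M) := min{n : M is generated by n functions}, equals ess sup_{ω∈Ω} dim(J(ω)). -/
/-!
If `Φ₁, …, Φₘ` generate `M`, then `J ω = span {Φᵢ ω}` almost everywhere, so `dim J ω ≤ m`.
Conversely, if `dim J ω ≤ k` almost everywhere, listing the nonzero Gram–Schmidt vectors of
`(Φᵢ ω)ᵢ` in the first `k` slots gives `k` measurable functions `Ψⱼ`, dominated by `∑ ‖Φᵢ‖`,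
that span `J ω` almost everywhere. They generate `M`: if `N ≤ M` is a closed MI space containing
the `Ψⱼ` and `Φ ∈ M`, the residual `Φ - P_N Φ` is orthogonal to every `g • Ψⱼ` with `g ∈ D`, so,
`D` being determining, it is pointwise orthogonal to the `Ψⱼ ω` while lying in `J ω`;
hence it vanishes.
-/

open MeasureTheory

/-- `M` is the MI space `M_D(A)` generated by `A`: the smallest closed multiplicatively
invariant subspace containing `A`. -/
def GeneratesMI {Ω E : Type*} [MeasurableSpace Ω] [NormedAddCommGroup E]
    [InnerProductSpace ℂ E] (ν : Measure Ω) (D : Set (Ω → ℂ))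
    (M : Submodule ℂ (Lp E 2 ν)) (A : Set (Lp E 2 ν)) : Prop :=
  A ⊆ (M : Set (Lp E 2 ν)) ∧ IsClosed (M : Set (Lp E 2 ν)) ∧
    IsMISpace ν D (M : Set (Lp E 2 ν)) ∧
    ∀ N : Submodule ℂ (Lp E 2 ν), IsClosed (N : Set (Lp E 2 ν)) →
      IsMISpace ν D (N : Set (Lp E 2 ν)) → A ⊆ (N : Set (Lp E 2 ν)) → M ≤ N

open Module Submodule InnerProductSpace Set

section GramSchmidtPacking

variable {𝕜 E : Type*} [RCLike 𝕜] [NormedAddCommGroup E] [InnerProductSpace 𝕜 E]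
  {ι : Type*} [LinearOrder ι] [LocallyFiniteOrderBot ι] [WellFoundedLT ι]

theorem inner_gramSchmidt_self (f : ι → E) (i : ι) :
    inner 𝕜 (gramSchmidt 𝕜 f i) (f i) = inner 𝕜 (gramSchmidt 𝕜 f i) (gramSchmidt 𝕜 f i) := by
  conv_lhs => rw [gramSchmidt_def'' 𝕜 f i]
  rw [inner_add_right, inner_sum, add_eq_left]
  refine Finset.sum_eq_zero fun j hj => ?_
  rw [inner_smul_right, gramSchmidt_orthogonal 𝕜 f (Finset.mem_Iio.1 hj).ne', mul_zero]

theorem norm_gramSchmidt_le (f : ι → E) (i : ι) : ‖gramSchmidt 𝕜 f i‖ ≤ ‖f i‖ := by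
  rcases eq_or_ne (gramSchmidt 𝕜 f i) 0 with h | h
  · simp [h]
  refine le_of_mul_le_mul_left ?_ (norm_pos_iff.2 h)
  calc ‖gramSchmidt 𝕜 f i‖ * ‖gramSchmidt 𝕜 f i‖
      = RCLike.re (inner 𝕜 (gramSchmidt 𝕜 f i) (f i)) := by
        rw [inner_gramSchmidt_self, inner_self_eq_norm_mul_norm]
    _ ≤ ‖gramSchmidt 𝕜 f i‖ * ‖f i‖ := (RCLike.re_le_norm _).trans (norm_inner_le_norm _ _)

variable (𝕜) in
open scoped Classical in
noncomputable def gramSchmidtIndex (f : ι → E) (i : ι) : ℕ :=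
  (Finset.filter (fun j => gramSchmidt 𝕜 f j ≠ 0) (Finset.Iio i)).card

variable (𝕜) in
/-- The `j`-th nonzero Gram–Schmidt vector of `f` (counting from `0`), or `0` if there are at
most `j` of them. -/
noncomputable def gramSchmidtPacked [Fintype ι] (f : ι → E) (j : ℕ) : E :=
  ∑ i, if gramSchmidtIndex 𝕜 f i = j then gramSchmidt 𝕜 f i else 0

theorem gramSchmidtIndex_lt_of_lt {f : ι → E} {i i' : ι} (hi : gramSchmidt 𝕜 f i ≠ 0)
    (hii' : i < i') : gramSchmidtIndex 𝕜 f i < gramSchmidtIndex 𝕜 f i' := by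
  classical
  refine Finset.card_lt_card ((Finset.ssubset_iff_of_subset ?_).2 ⟨i, ?_, ?_⟩)
  · exact Finset.filter_subset_filter _ (Finset.Iio_subset_Iio hii'.le)
  · simp [hii', hi]
  · simp

theorem gramSchmidtIndex_injOn (f : ι → E) :
    InjOn (gramSchmidtIndex 𝕜 f) {i | gramSchmidt 𝕜 f i ≠ 0} := by
  intro i hi i' hi' h
  rcases lt_trichotomy i i' with hlt | heq | hgt
  · exact absurd h (gramSchmidtIndex_lt_of_lt hi hlt).ne
  · exact heq
  · exact absurd h (gramSchmidtIndex_lt_of_lt hi' hgt).ne'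

theorem gramSchmidtIndex_lt_finrank [Fintype ι] {f : ι → E} {i : ι}
    (hi : gramSchmidt 𝕜 f i ≠ 0) : gramSchmidtIndex 𝕜 f i < finrank 𝕜 (span 𝕜 (range f)) := by
  classical
  have := FiniteDimensional.span_of_finite 𝕜 (finite_range f)
  set T := Finset.filter (fun j => gramSchmidt 𝕜 f j ≠ 0) Finset.univ
  have hindep : LinearIndependent 𝕜 fun j : T => gramSchmidt 𝕜 f j :=
    linearIndependent_of_ne_zero_of_inner_eq_zero (fun j => (Finset.mem_filter.1 j.2).2)
      fun j j' hjj' => gramSchmidt_orthogonal 𝕜 f (Subtype.coe_injective.ne hjj')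
  have hspan : span 𝕜 (range fun j : T => gramSchmidt 𝕜 f j) ≤ span 𝕜 (range f) := by
    rw [← span_gramSchmidt 𝕜 f]
    exact span_mono (range_subset_iff.2 fun j => mem_range_self _)
  calc gramSchmidtIndex 𝕜 f i < T.card :=
        Finset.card_lt_card ((Finset.ssubset_iff_of_subset
          (Finset.filter_subset_filter _ (Finset.subset_univ _))).2 ⟨i, by simp [hi], by simp⟩)
    _ = finrank 𝕜 (span 𝕜 (range fun j : T => gramSchmidt 𝕜 f j)) := by
        rw [finrank_span_eq_card hindep, Fintype.card_coe]
    _ ≤ finrank 𝕜 (span 𝕜 (range f)) := Submodule.finrank_mono hspan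

theorem gramSchmidtPacked_gramSchmidtIndex [Fintype ι] {f : ι → E} {i : ι}
    (hi : gramSchmidt 𝕜 f i ≠ 0) :
    gramSchmidtPacked 𝕜 f (gramSchmidtIndex 𝕜 f i) = gramSchmidt 𝕜 f i := by
  rw [gramSchmidtPacked, Finset.sum_eq_single i _ (by simp), if_pos rfl]
  intro i' _ hi'i
  split_ifs with h
  · by_contra hi'
    exact hi'i (gramSchmidtIndex_injOn f hi' hi h)
  · rfl

theorem span_gramSchmidtPacked [Fintype ι] {f : ι → E} {k : ℕ}
    (hk : finrank 𝕜 (span 𝕜 (range f)) ≤ k) :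
    span 𝕜 (range fun j : Fin k => gramSchmidtPacked 𝕜 f j) = span 𝕜 (range f) := by
  refine le_antisymm (span_le.2 ?_) ?_
  · rintro _ ⟨j, rfl⟩
    rw [← span_gramSchmidt 𝕜 f]
    refine sum_mem fun i _ => ?_
    split_ifs
    · exact subset_span (mem_range_self i)
    · exact zero_mem _
  · rw [← span_gramSchmidt 𝕜 f, span_le]
    rintro _ ⟨i, rfl⟩
    rcases eq_or_ne (gramSchmidt 𝕜 f i) 0 with h | h
    · rw [h]
      exact zero_mem _
    · rw [← gramSchmidtPacked_gramSchmidtIndex h]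
      exact subset_span ⟨⟨_, (gramSchmidtIndex_lt_finrank h).trans_le hk⟩, rfl⟩

theorem norm_gramSchmidtPacked_le [Fintype ι] (f : ι → E) (j : ℕ) :
    ‖gramSchmidtPacked 𝕜 f j‖ ≤ ∑ i, ‖f i‖ := by
  refine (norm_sum_le _ _).trans (Finset.sum_le_sum fun i _ => ?_)
  split_ifs
  · exact norm_gramSchmidt_le f i
  · simp

variable [MeasurableSpace E] [BorelSpace E] [SecondCountableTopology E]

theorem measurable_gramSchmidt (i : ι) : Measurable fun f : ι → E => gramSchmidt 𝕜 f i := by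
  induction i using WellFoundedLT.induction with
  | ind i ih =>
    have hdef : (fun f : ι → E => gramSchmidt 𝕜 f i) = fun f => f i - ∑ j ∈ Finset.Iio i,
        (inner 𝕜 (gramSchmidt 𝕜 f j) (f i) / (‖gramSchmidt 𝕜 f j‖ : 𝕜) ^ 2) •
          gramSchmidt 𝕜 f j :=
      funext fun f => eq_sub_of_add_eq (gramSchmidt_def'' 𝕜 f i).symm
    rw [hdef]
    refine (measurable_pi_apply i).sub (Finset.measurable_sum _ fun j hj => ?_)
    have hj := ih j (Finset.mem_Iio.1 hj)
    fun_prop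

theorem measurable_gramSchmidtIndex (i : ι) :
    Measurable fun f : ι → E => gramSchmidtIndex 𝕜 f i := by
  classical
  simp_rw [gramSchmidtIndex, Finset.card_filter]
  refine Finset.measurable_sum _ fun j _ => Measurable.ite ?_ measurable_const measurable_const
  exact (measurableSet_singleton 0).preimage (measurable_gramSchmidt j) |>.compl

theorem measurable_gramSchmidtPacked [Fintype ι] (j : ℕ) :
    Measurable fun f : ι → E => gramSchmidtPacked 𝕜 f j :=
  Finset.measurable_sum _ fun i _ =>
    Measurable.ite ((measurableSet_singleton j).preimage (measurable_gramSchmidtIndex i))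
      (measurable_gramSchmidt i) measurable_const

end GramSchmidtPacking

theorem exists_Lp_ae_span_eq {Ω E : Type*} [MeasurableSpace Ω] {ν : Measure Ω}
    [NormedAddCommGroup E] [InnerProductSpace ℂ E] [SecondCountableTopology E]
    {ι : Type*} [LinearOrder ι] [LocallyFiniteOrderBot ι] [WellFoundedLT ι] [Fintype ι]
    {p : ENNReal} (Φ : ι → Lp E p ν) {k : ℕ}
    (hk : ∀ᵐ ω ∂ν, finrank ℂ (span ℂ (range fun i => Φ i ω)) ≤ k) :
    ∃ Ψ : Fin k → Lp E p ν,
      ∀ᵐ ω ∂ν, span ℂ (range fun j => Ψ j ω) = span ℂ (range fun i => Φ i ω) := by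
  borelize E
  have hΦ : AEMeasurable (fun ω i => Φ i ω) ν :=
    aemeasurable_pi_lambda _ fun i => (Lp.aestronglyMeasurable (Φ i)).aemeasurable
  have hbound : MemLp (fun ω => ∑ i, ‖Φ i ω‖) p ν :=
    memLp_finsetSum _ fun i _ => (Lp.memLp (Φ i)).norm
  have hmem (j : Fin k) : MemLp (fun ω => gramSchmidtPacked ℂ (fun i => Φ i ω) j) p ν :=
    hbound.of_le ((measurable_gramSchmidtPacked j).comp_aemeasurable hΦ).aestronglyMeasurable
      (ae_of_all _ fun ω => (norm_gramSchmidtPacked_le _ _).trans (Real.le_norm_self _))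
  refine ⟨fun j => (hmem j).toLp, ?_⟩
  filter_upwards [ae_all_iff.2 fun j => (hmem j).coeFn_toLp, hk] with ω hΨ hω
  simp_rw [hΨ]
  exact span_gramSchmidtPacked hω

theorem eq_zero_of_mem_span_of_inner_eq_zero {𝕜 E : Type*} [RCLike 𝕜] [NormedAddCommGroup E]
    [InnerProductSpace 𝕜 E] {ι : Type*} {u : ι → E} {v : E} (hv : v ∈ span 𝕜 (range u))
    (h : ∀ j, inner 𝕜 v (u j) = 0) : v = 0 := by
  have : span 𝕜 (range u) ≤ LinearMap.ker (innerₛₗ 𝕜 v) :=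
    span_le.2 <| range_subset_iff.2 h
  exact inner_self_eq_zero.1 (this hv)

section MISpace

variable {Ω E : Type*} [MeasurableSpace Ω] {ν : Measure Ω} [NormedAddCommGroup E]
  [InnerProductSpace ℂ E] {D : Set (Ω → ℂ)}

theorem IsMISpace.inter {M N : Set (Lp E 2 ν)} (hM : IsMISpace ν D M) (hN : IsMISpace ν D N) :
    IsMISpace ν D (M ∩ N) :=
  fun Φ hΦ g hg Ψ hΨ => ⟨hM Φ hΦ.1 g hg Ψ hΨ, hN Φ hΦ.2 g hg Ψ hΨ⟩

variable (hDbdd : ∀ g ∈ D, MemLp g ⊤ ν)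
  (hDdet : ∀ f : Ω → ℂ, Integrable f ν → (∀ g ∈ D, ∫ ω, f ω * g ω ∂ν = 0) → f =ᵐ[ν] 0)
include hDbdd hDdet

theorem ae_inner_eq_zero_of_mem_orthogonal {N : Submodule ℂ (Lp E 2 ν)}
    (hN : IsMISpace ν D (N : Set (Lp E 2 ν))) {Ψ r : Lp E 2 ν} (hΨ : Ψ ∈ N) (hr : r ∈ Nᗮ) :
    (fun ω => inner ℂ (r ω) (Ψ ω)) =ᵐ[ν] 0 := by
  refine hDdet _ (L2.integrable_inner r Ψ) fun g hg => ?_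
  have hgΨ : MemLp (g • ⇑Ψ) 2 ν := (Lp.memLp Ψ).smul (hDbdd g hg)
  calc ∫ ω, inner ℂ (r ω) (Ψ ω) * g ω ∂ν
        = ∫ ω, inner ℂ (r ω) (MemLp.toLp (g • ⇑Ψ) hgΨ ω) ∂ν := by
        refine integral_congr_ae ?_
        filter_upwards [hgΨ.coeFn_toLp] with ω h
        rw [h, Pi.smul_apply', inner_smul_right, mul_comm]
    _ = inner ℂ r hgΨ.toLp := (L2.inner_def _ _).symm
    _ = 0 := inner_left_of_mem_orthogonal (hN Ψ hΨ g hg _ hgΨ.coeFn_toLp) hr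

theorem le_of_ae_le_span [CompleteSpace E] {M N : Submodule ℂ (Lp E 2 ν)}
    {J : Ω → Submodule ℂ E} (hJM : ∀ Φ : Lp E 2 ν, Φ ∈ M ↔ ∀ᵐ ω ∂ν, Φ ω ∈ J ω)
    (hNc : IsClosed (N : Set (Lp E 2 ν))) (hN : IsMISpace ν D (N : Set (Lp E 2 ν)))
    (hNM : N ≤ M)
    {ι : Type*} [Countable ι] {Ψ : ι → Lp E 2 ν} (hΨ : ∀ j, Ψ j ∈ N)
    (hJΨ : ∀ᵐ ω ∂ν, J ω ≤ span ℂ (range fun j => Ψ j ω)) : M ≤ N := by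
  intro Φ hΦ
  have : CompleteSpace N := hNc.completeSpace_coe
  set r := Φ - N.starProjection Φ
  have hrM : r ∈ M := M.sub_mem hΦ (hNM (N.starProjection_apply_mem Φ))
  have hrN : r ∈ Nᗮ := N.sub_starProjection_mem_orthogonal Φ
  have hr : r = 0 := by
    refine Lp.ext ?_
    filter_upwards [(hJM r).1 hrM, hJΨ, Lp.coeFn_zero E 2 ν, ae_all_iff.2 fun j =>
      ae_inner_eq_zero_of_mem_orthogonal hDbdd hDdet hN (hΨ j) hrN] with ω hrJ hJ h0 hinner
    rw [h0]
    exact eq_zero_of_mem_span_of_inner_eq_zero (hJ hrJ) hinner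
  exact N.starProjection_eq_self_iff.1 (sub_eq_zero.1 hr).symm

theorem generatesMI_of_ae_le_span [CompleteSpace E] {M : Submodule ℂ (Lp E 2 ν)}
    (hMc : IsClosed (M : Set (Lp E 2 ν))) (hM : IsMISpace ν D (M : Set (Lp E 2 ν)))
    {J : Ω → Submodule ℂ E}
    (hJM : ∀ Φ : Lp E 2 ν, Φ ∈ M ↔ ∀ᵐ ω ∂ν, Φ ω ∈ J ω)
    {ι : Type*} [Countable ι] {Ψ : ι → Lp E 2 ν} (hΨ : ∀ j, Ψ j ∈ M)
    (hJΨ : ∀ᵐ ω ∂ν, J ω ≤ span ℂ (range fun j => Ψ j ω)) : GeneratesMI ν D M (range Ψ) := by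
  refine ⟨range_subset_iff.2 hΨ, hMc, hM, fun N hNc hN hΨN => ?_⟩
  exact (le_of_ae_le_span hDbdd hDdet hJM (hNc.inter hMc) (hN.inter hM) inf_le_right
    (fun j => ⟨hΨN (mem_range_self j), hΨ j⟩) hJΨ).trans inf_le_left

theorem exists_generatesMI_of_ae_finrank_le [CompleteSpace E] [SecondCountableTopology E]
    {M : Submodule ℂ (Lp E 2 ν)} {J : Ω → Submodule ℂ E}
    (hJM : ∀ Φ : Lp E 2 ν, Φ ∈ M ↔ ∀ᵐ ω ∂ν, Φ ω ∈ J ω)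
    {m : ℕ} {Φ : Fin m → Lp E 2 ν} (hΦ : GeneratesMI ν D M (range Φ))
    (hJΦ : ∀ᵐ ω ∂ν, J ω = span ℂ (range fun i => Φ i ω))
    {k : ℕ} (hk : ∀ᵐ ω ∂ν, finrank ℂ (J ω) ≤ k) :
    ∃ Ψ : Fin k → Lp E 2 ν, GeneratesMI ν D M (range Ψ) := by
  obtain ⟨Ψ, hΨ⟩ := exists_Lp_ae_span_eq Φ (k := k) <| by
    filter_upwards [hJΦ, hk] with ω hJ hJk
    rwa [← hJ]
  have hJΨ : ∀ᵐ ω ∂ν, J ω = span ℂ (range fun j => Ψ j ω) := by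
    filter_upwards [hΨ, hJΦ] with ω hΨΦ hJ
    rw [hJ, hΨΦ]
  refine ⟨Ψ, generatesMI_of_ae_le_span hDbdd hDdet hΦ.2.1 hΦ.2.2.1 hJM (fun j => ?_)
    (hJΨ.mono fun ω hω => hω.le)⟩
  exact (hJM _).2 (hJΨ.mono fun ω hω => hω ▸ subset_span (mem_range_self j))

end MISpace

theorem length_eq_essSup_dim_range_general
    {Ω : Type*} [MeasurableSpace Ω] (ν : Measure Ω)
    {E : Type*} [NormedAddCommGroup E] [InnerProductSpace ℂ E] [CompleteSpace E]
    [SecondCountableTopology E]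
    (D : Set (Ω → ℂ))
    (hDbdd : ∀ g ∈ D, MemLp g ⊤ ν)
    (hDdet : ∀ f : Ω → ℂ, Integrable f ν →
      (∀ g ∈ D, ∫ ω, f ω * g ω ∂ν = 0) → f =ᵐ[ν] 0)
    (M : Submodule ℂ (Lp E 2 ν))
    (hMfin : ∃ n : ℕ, ∃ Φ : Fin n → Lp E 2 ν, GeneratesMI ν D M (Set.range Φ))
    (J : Ω → Submodule ℂ E)
    -- J is the range function associated to M
    (hJM : ∀ Φ : Lp E 2 ν, Φ ∈ M ↔ ∀ᵐ ω ∂ν, Φ ω ∈ J ω)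
    (hJgen : ∀ (n : ℕ) (Φ : Fin n → Lp E 2 ν), GeneratesMI ν D M (Set.range Φ) →
      ∀ᵐ ω ∂ν, J ω = (Submodule.span ℂ {v | ∃ i, v = Φ i ω}).topologicalClosure) :
    (↑(sInf {n : ℕ | ∃ Φ : Fin n → Lp E 2 ν, GeneratesMI ν D M (Set.range Φ)}) : ℕ∞) =
      essSup (fun ω => (Module.finrank ℂ (J ω) : ℕ∞)) ν := by
  set m := sInf {n : ℕ | ∃ Φ : Fin n → Lp E 2 ν, GeneratesMI ν D M (range Φ)}
  obtain ⟨Φ, hΦ⟩ : ∃ Φ : Fin m → Lp E 2 ν, GeneratesMI ν D M (range Φ) := Nat.sInf_mem hMfin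
  have hJΦ : ∀ᵐ ω ∂ν, J ω = span ℂ (range fun i => Φ i ω) := by
    filter_upwards [hJgen m Φ hΦ] with ω hω
    have hrange : {v | ∃ i, v = Φ i ω} = range fun i => Φ i ω := by
      ext
      simp [eq_comm]
    have := FiniteDimensional.span_of_finite ℂ (finite_range fun i => Φ i ω)
    rw [hω, hrange]
    exact (closed_of_finiteDimensional _).submodule_topologicalClosure_eq
  have hle : essSup (fun ω => (finrank ℂ (J ω) : ℕ∞)) ν ≤ m := by
    refine essSup_le_of_ae_le _ (hJΦ.mono fun ω hω => ?_)
    change (finrank ℂ (J ω) : ℕ∞) ≤ m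
    rw [hω]
    exact_mod_cast (finrank_range_le_card _).trans (Fintype.card_fin m).le
  obtain ⟨k, hk⟩ := ENat.ne_top_iff_exists.1 (ne_top_of_le_ne_top (ENat.natCast_ne_top m) hle)
  have hJk : ∀ᵐ ω ∂ν, finrank ℂ (J ω) ≤ k := by
    filter_upwards [ae_le_essSup (μ := ν) (f := fun ω => (finrank ℂ (J ω) : ℕ∞))] with ω hω
    rw [← hk] at hω
    exact_mod_cast hω
  obtain ⟨Ψ, hΨ⟩ := exists_generatesMI_of_ae_finrank_le hDbdd hDdet hJM hΦ hJΦ hJk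
  have hmk : m ≤ k := Nat.sInf_le ⟨Ψ, hΨ⟩
  rw [← hk] at hle ⊢
  exact le_antisymm (by exact_mod_cast hmk) hle

/-- The length (minimal number of generators) of a finitely generated MI space equals the
essential supremum of the dimensions of its range function. -/
theorem length_eq_essSup_dim_range
    {Ω : Type*} [MeasurableSpace Ω] (ν : Measure Ω) [SigmaFinite ν]
    {E : Type*} [NormedAddCommGroup E] [InnerProductSpace ℂ E] [CompleteSpace E]
    [SecondCountableTopology E]
    [TopologicalSpace.SeparableSpace (Lp ℂ 2 ν)]
    (D : Set (Ω → ℂ))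
    (hDbdd : ∀ g ∈ D, MemLp g ⊤ ν)
    (hDdet : ∀ f : Ω → ℂ, Integrable f ν →
      (∀ g ∈ D, ∫ ω, f ω * g ω ∂ν = 0) → f =ᵐ[ν] 0)
    (M : Submodule ℂ (Lp E 2 ν))
    (hMfin : ∃ n : ℕ, ∃ Φ : Fin n → Lp E 2 ν, GeneratesMI ν D M (Set.range Φ))
    (J : Ω → Submodule ℂ E) (hJ : IsMeasurableRangeFunction J)
    -- J is the range function associated to M
    (hJM : ∀ Φ : Lp E 2 ν, Φ ∈ M ↔ ∀ᵐ ω ∂ν, Φ ω ∈ J ω)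
    (hJgen : ∀ (n : ℕ) (Φ : Fin n → Lp E 2 ν), GeneratesMI ν D M (Set.range Φ) →
      ∀ᵐ ω ∂ν, J ω = (Submodule.span ℂ {v | ∃ i, v = Φ i ω}).topologicalClosure) :
    (↑(sInf {n : ℕ | ∃ Φ : Fin n → Lp E 2 ν, GeneratesMI ν D M (Set.range Φ)}) : ℕ∞) =
      essSup (fun ω => (Module.finrank ℂ (J ω) : ℕ∞)) ν :=
  length_eq_essSup_dim_range_general ν D hDbdd hDdet M hMfin J hJM hJgen
end

section
/- Let G be a second countable LCA group and V ⊆ L²(G) a closed subspace. Then V is invariant under all translations T_γ, γ ∈ G, if and only if there exists a measurable set E ⊆ Ĝ such that V = {f ∈ L²(G) : supp(f̂) ⊆ E}. -/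
open MeasureTheory ComplexConjugate
open scoped ENNReal InnerProductSpace

/-! Under `F`, translation invariance of `V` becomes invariance of `W = F V` under multiplication by
the characters `e y`, and since `conj (e y) = e (-y)` also under the adjoints of these
multiplications. Hence the orthogonal projection `P` onto `W` commutes with them, and testing
against the characters, which determine integrable functions, gives
`u · conj (P v) = P u · conj v` a.e. For a strictly positive `w ∈ L²` this forces `P w ∈ {0, w}`
pointwise, so `P` is multiplication by the indicator of `E = {P w ≠ 0}`. -/

theorem map_neg_eq_conj_of_norm_eq_one {G : Type*} [AddGroup G] {χ : G → ℂ}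
    (hadd : ∀ x y, χ (x + y) = χ x * χ y) (hnorm : ∀ x, ‖χ x‖ = 1) (y : G) :
    χ (-y) = conj (χ y) := by
  have hχ0 : χ 0 = 1 := by
    have h := hadd 0 0
    rw [add_zero] at h
    exact (mul_eq_left₀ (norm_ne_zero_iff.1 (by simp [hnorm]))).1 h.symm
  rw [← Complex.inv_eq_conj (hnorm y)]
  exact eq_inv_of_mul_eq_one_left (by rw [← hadd, neg_add_cancel, hχ0])

theorem Submodule.commute_starProjection_of_mapsTo {𝕜 E : Type*} [RCLike 𝕜]
    [NormedAddCommGroup E] [InnerProductSpace 𝕜 E] [CompleteSpace E]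
    (K : Submodule 𝕜 E) [K.HasOrthogonalProjection] {T : E →L[𝕜] E}
    (hT : Set.MapsTo T K K) (hT' : Set.MapsTo (ContinuousLinearMap.adjoint T) K K) :
    Commute K.starProjection T := by
  refine ContinuousLinearMap.ext fun u => ?_
  change K.starProjection (T u) = T (K.starProjection u)
  refine K.eq_starProjection_of_mem_of_inner_eq_zero (hT (K.starProjection_apply_mem u))
    fun z hz => ?_
  rw [← map_sub, ← ContinuousLinearMap.adjoint_inner_right]
  exact K.inner_left_of_mem_orthogonal (hT' hz) (K.sub_starProjection_mem_orthogonal u)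

namespace MeasureTheory

variable {α : Type*} [MeasurableSpace α] {μ : Measure α}

theorem exists_pos_memLp_two [SigmaFinite μ] : ∃ w : α → ℝ, (∀ ξ, 0 < w ξ) ∧ MemLp w 2 μ := by
  obtain ⟨g, hg0, hgm, hgint⟩ := exists_pos_lintegral_lt_of_sigmaFinite μ (ε := 1) one_ne_zero
  refine ⟨fun ξ => Real.sqrt (g ξ), fun ξ => Real.sqrt_pos.2 (hg0 ξ), ?_⟩
  have hsqrt : Measurable fun ξ => Real.sqrt (g ξ) := hgm.coe_nnreal_real.sqrt
  rw [memLp_two_iff_integrable_sq hsqrt.aestronglyMeasurable]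
  simp only [Real.sq_sqrt (NNReal.coe_nonneg _)]
  exact ⟨hgm.coe_nnreal_real.aestronglyMeasurable,
    hasFiniteIntegral_iff_ofNNReal.2 (hgint.trans ENNReal.one_lt_top)⟩

theorem AEStronglyMeasurable.exists_measurableSet_ae_eq_indicator {β : Type*}
    [TopologicalSpace β] [TopologicalSpace.MetrizableSpace β] [Zero β] {f g : α → β}
    (hf : AEStronglyMeasurable f μ) (hfg : ∀ᵐ ξ ∂μ, f ξ = 0 ∨ f ξ = g ξ) :
    ∃ E : Set α, MeasurableSet E ∧ f =ᵐ[μ] E.indicator g := by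
  refine ⟨Function.support (hf.mk f), hf.stronglyMeasurable_mk.measurableSet_support, ?_⟩
  filter_upwards [hf.ae_eq_mk, hfg] with ξ hmk hξ
  by_cases hE : hf.mk f ξ = 0
  · rw [Set.indicator_of_notMem (by simpa using hE), hmk, hE]
  · rw [Set.indicator_of_mem (by simpa using hE)]
    exact hξ.resolve_left (hmk ▸ hE)

noncomputable def mulL2 {φ : α → ℂ} (hφ : MemLp φ ∞ μ) : Lp ℂ 2 μ →L[ℂ] Lp ℂ 2 μ :=
  (ContinuousLinearMap.mul ℂ ℂ).holderL μ ∞ 2 2 (hφ.toLp φ)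

theorem coeFn_mulL2 {φ : α → ℂ} (hφ : MemLp φ ∞ μ) (u : Lp ℂ 2 μ) :
    ⇑(mulL2 hφ u) =ᵐ[μ] fun ξ => φ ξ * u ξ := by
  filter_upwards [(ContinuousLinearMap.mul ℂ ℂ).coeFn_holder (r := 2) (hφ.toLp φ) u,
    hφ.coeFn_toLp] with ξ hmul hφξ
  simp [mulL2, hmul, hφξ]

theorem adjoint_mulL2 {φ ψ : α → ℂ} (hφ : MemLp φ ∞ μ) (hψ : MemLp ψ ∞ μ)
    (hψφ : ψ =ᵐ[μ] fun ξ => conj (φ ξ)) :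
    ContinuousLinearMap.adjoint (mulL2 hφ) = mulL2 hψ := by
  refine ((ContinuousLinearMap.eq_adjoint_iff _ _).2 fun u v => ?_).symm
  rw [L2.inner_def, L2.inner_def]
  refine integral_congr_ae ?_
  filter_upwards [coeFn_mulL2 hψ u, coeFn_mulL2 hφ v, hψφ] with ξ hu hv hξ
  simp only [RCLike.inner_apply, hu, hv, hξ, map_mul, Complex.conj_conj]
  ring

theorem ae_mul_conj_eq_of_commute_mulL2 {ι : Type*} {e : ι → α → ℂ} (he : ∀ i, MemLp (e i) ∞ μ)
    (hdet : ∀ h : α → ℂ, Integrable h μ → (∀ i, ∫ ξ, h ξ * e i ξ ∂μ = 0) → h =ᵐ[μ] 0)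
    {P : Lp ℂ 2 μ →L[ℂ] Lp ℂ 2 μ} (hP : IsSelfAdjoint P) (hPe : ∀ i, Commute P (mulL2 (he i)))
    (u v : Lp ℂ 2 μ) :
    (fun ξ => u ξ * conj (P v ξ)) =ᵐ[μ] fun ξ => P u ξ * conj (v ξ) := by
  have hint : Integrable (fun ξ => u ξ * conj (P v ξ) - P u ξ * conj (v ξ)) μ :=
    ((L2.integrable_inner (P v) u).sub (L2.integrable_inner v (P u))).congr
      (.of_forall fun ξ => by simp only [Pi.sub_apply, RCLike.inner_apply])
  have horth : ∀ i, ∫ ξ, (u ξ * conj (P v ξ) - P u ξ * conj (v ξ)) * e i ξ ∂μ = 0 := by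
    intro i
    calc _ = ∫ ξ, ⟪P v ξ, mulL2 (he i) u ξ⟫_ℂ - ⟪v ξ, mulL2 (he i) (P u) ξ⟫_ℂ ∂μ := by
          refine integral_congr_ae ?_
          filter_upwards [coeFn_mulL2 (he i) u, coeFn_mulL2 (he i) (P u)] with ξ hu hPu
          simp only [RCLike.inner_apply, hu, hPu]
          ring
      _ = ⟪P v, mulL2 (he i) u⟫_ℂ - ⟪v, mulL2 (he i) (P u)⟫_ℂ := by
          rw [integral_sub (L2.integrable_inner _ _) (L2.integrable_inner _ _), L2.inner_def,
            L2.inner_def]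
      _ = 0 := by
          have hPM : P (mulL2 (he i) u) = mulL2 (he i) (P u) :=
            DFunLike.congr_fun (hPe i).eq u
          rw [← ContinuousLinearMap.adjoint_inner_right, hP.adjoint_eq, hPM, sub_self]
  filter_upwards [hdet _ hint horth] with ξ hξ
  exact sub_eq_zero.1 hξ

theorem exists_measurableSet_ae_eq_indicator_of_ae_mul_conj_eq [SigmaFinite μ]
    {P : Lp ℂ 2 μ →L[ℂ] Lp ℂ 2 μ} (hP : IsIdempotentElem P)
    (hloc : ∀ u v : Lp ℂ 2 μ, (fun ξ => u ξ * conj (P v ξ)) =ᵐ[μ] fun ξ => P u ξ * conj (v ξ)) :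
    ∃ E : Set α, MeasurableSet E ∧ ∀ u : Lp ℂ 2 μ, ⇑(P u) =ᵐ[μ] E.indicator u := by
  obtain ⟨w, hw0, hw⟩ := exists_pos_memLp_two (μ := μ)
  set wL : Lp ℂ 2 μ := hw.ofReal.toLp fun ξ => (w ξ : ℂ)
  have hwL : ⇑wL =ᵐ[μ] fun ξ => (w ξ : ℂ) := MemLp.coeFn_toLp _
  have hwne : ∀ ξ, (w ξ : ℂ) ≠ 0 := fun ξ => Complex.ofReal_ne_zero.2 (hw0 ξ).ne'
  have hreal : ∀ᵐ ξ ∂μ, conj (P wL ξ) = P wL ξ := by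
    filter_upwards [hloc wL wL, hwL] with ξ hξ hwξ
    rw [hwξ, Complex.conj_ofReal, mul_comm (P wL ξ)] at hξ
    exact mul_left_cancel₀ (hwne ξ) hξ
  have hdich : ∀ᵐ ξ ∂μ, P wL ξ = 0 ∨ P wL ξ = w ξ := by
    have hPP : P (P wL) = P wL := congrArg (· wL) hP.eq
    filter_upwards [hloc wL (P wL), hwL, hreal] with ξ hξ hwξ hrξ
    rw [hPP, hwξ, hrξ] at hξ
    have : P wL ξ * (P wL ξ - w ξ) = 0 := by rw [mul_sub, ← hξ]; ring
    exact (mul_eq_zero.1 this).imp_right sub_eq_zero.1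
  obtain ⟨E, hE, hPwE⟩ :=
    (Lp.aestronglyMeasurable (P wL)).exists_measurableSet_ae_eq_indicator hdich
  refine ⟨E, hE, fun u => ?_⟩
  filter_upwards [hloc u wL, hwL, hreal, hPwE] with ξ hξ hwξ hrξ hEξ
  rw [hrξ, hEξ, hwξ, Complex.conj_ofReal] at hξ
  by_cases hξE : ξ ∈ E
  · rw [Set.indicator_of_mem hξE] at hξ ⊢
    exact (mul_right_cancel₀ (hwne ξ) hξ).symm
  · rw [Set.indicator_of_notMem hξE, mul_zero] at hξ
    rw [Set.indicator_of_notMem hξE]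
    exact (mul_eq_zero.1 hξ.symm).resolve_right (hwne ξ)

theorem exists_measurableSet_mem_iff_of_mapsTo_mulL2 [SigmaFinite μ] {ι : Type*}
    {e : ι → α → ℂ} (he : ∀ i, MemLp (e i) ∞ μ)
    (hconj : ∀ i, ∃ j, e j =ᵐ[μ] fun ξ => conj (e i ξ))
    (hdet : ∀ h : α → ℂ, Integrable h μ → (∀ i, ∫ ξ, h ξ * e i ξ ∂μ = 0) → h =ᵐ[μ] 0)
    {W : Submodule ℂ (Lp ℂ 2 μ)} (hW : IsClosed (W : Set (Lp ℂ 2 μ)))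
    (hWe : ∀ i, Set.MapsTo (mulL2 (he i)) W W) :
    ∃ E : Set α, MeasurableSet E ∧ ∀ u : Lp ℂ 2 μ, u ∈ W ↔ ∀ᵐ ξ ∂μ, ξ ∉ E → u ξ = 0 := by
  have : CompleteSpace W := hW.completeSpace_coe
  have hcomm : ∀ i, Commute W.starProjection (mulL2 (he i)) := fun i => by
    obtain ⟨j, hj⟩ := hconj i
    exact W.commute_starProjection_of_mapsTo (hWe i) (adjoint_mulL2 (he i) (he j) hj ▸ hWe j)
  obtain ⟨E, hE, hPE⟩ := exists_measurableSet_ae_eq_indicator_of_ae_mul_conj_eq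
    W.isIdempotentElem_starProjection
    (ae_mul_conj_eq_of_commute_mulL2 he hdet (isSelfAdjoint_starProjection W) hcomm)
  refine ⟨E, hE, fun u => ?_⟩
  rw [← W.starProjection_eq_self_iff, Lp.ext_iff]
  constructor
  · intro hu
    filter_upwards [(hPE u).symm.trans hu] with ξ hξ hξE
    rwa [Set.indicator_of_notMem hξE, eq_comm] at hξ
  · intro hu
    refine (hPE u).trans ?_
    filter_upwards [hu] with ξ hξ
    by_cases hξE : ξ ∈ E
    · exact Set.indicator_of_mem hξE _
    · rw [Set.indicator_of_notMem hξE, hξ hξE]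

end MeasureTheory

/-- `Gh` models the dual group and `e x = (x, ·)` its pairing with `G`; `hFtrans` says
`F (T_y g) = (−y, ·) · F g`. -/
theorem translation_invariant_iff_support_general
    {G : Type*} [AddCommGroup G] [TopologicalSpace G] [IsTopologicalAddGroup G]
    [MeasurableSpace G] [BorelSpace G]
    (mG : Measure G) [mG.IsAddHaarMeasure]
    {Gh : Type*} [MeasurableSpace Gh] (mGh : Measure Gh) [SigmaFinite mGh]
    (e : G → Gh → ℂ)
    (hemeas : ∀ x, Measurable (e x))
    (headd : ∀ x y ξ, e (x + y) ξ = e x ξ * e y ξ)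
    (henorm : ∀ x ξ, ‖e x ξ‖ = 1)
    -- the characters form a determining family (uniqueness of Fourier coefficients)
    (hedet : ∀ h : Gh → ℂ, Integrable h mGh →
      (∀ x : G, ∫ ξ, h ξ * e x ξ ∂mGh = 0) → h =ᵐ[mGh] 0)
    -- the Fourier–Plancherel transform
    (F : Lp ℂ 2 mG ≃ₗᵢ[ℂ] Lp ℂ 2 mGh)
    (hFtrans : ∀ y : G, ∀ f g : Lp ℂ 2 mG, (⇑g =ᵐ[mG] fun x => f (x - y)) →
      ⇑(F g) =ᵐ[mGh] fun ξ => conj (e y ξ) * (F f) ξ)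
    (V : Submodule ℂ (Lp ℂ 2 mG)) (hV : IsClosed (V : Set (Lp ℂ 2 mG))) :
    (∀ y : G, ∀ f ∈ V, ∀ g : Lp ℂ 2 mG,
        (⇑g =ᵐ[mG] fun x => f (x - y)) → g ∈ V) ↔
      ∃ E : Set Gh, MeasurableSet E ∧
        ∀ f : Lp ℂ 2 mG, f ∈ V ↔ ∀ᵐ ξ ∂mGh, ξ ∉ E → (F f) ξ = 0 := by
  have he : ∀ y, MemLp (e y) ∞ mGh := fun y =>
    memLp_top_of_bound (hemeas y).aestronglyMeasurable 1 (.of_forall fun ξ => (henorm y ξ).le)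
  have heneg : ∀ y ξ, e (-y) ξ = conj (e y ξ) := fun y ξ =>
    map_neg_eq_conj_of_norm_eq_one (fun a b => headd a b ξ) (fun x => henorm x ξ) y
  set W := V.comap (F.symm.toLinearEquiv : Lp ℂ 2 mGh →ₗ[ℂ] Lp ℂ 2 mG)
  have hW : IsClosed (W : Set (Lp ℂ 2 mGh)) := hV.preimage F.symm.continuous
  have hFW : ∀ f, F f ∈ W ↔ f ∈ V := fun f => by simp [W]
  constructor
  · intro hVinv
    have hWe : ∀ y, Set.MapsTo (mulL2 (he y)) W W := by
      intro y u hu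
      have hmp := measurePreserving_sub_right mG (-y)
      have hg := Lp.coeFn_compMeasurePreserving (F.symm u) hmp
      have hFg : F (Lp.compMeasurePreserving _ hmp (F.symm u)) = mulL2 (he y) u := by
        refine Lp.ext ((hFtrans _ _ _ hg).trans ?_)
        filter_upwards [coeFn_mulL2 (he y) u] with ξ hξ
        rw [hξ, ← heneg, neg_neg, F.apply_symm_apply]
      exact hFg ▸ (hFW _).2 (hVinv _ _ hu _ hg)
    obtain ⟨E, hE, hWE⟩ := exists_measurableSet_mem_iff_of_mapsTo_mulL2 he
      (fun y => ⟨-y, .of_forall (heneg y)⟩) hedet hW hWe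
    exact ⟨E, hE, fun f => (hFW f).symm.trans (hWE (F f))⟩
  · rintro ⟨E, -, hVE⟩ y f hf g hg
    refine (hVE g).2 ?_
    filter_upwards [hFtrans y f g hg, (hVE f).1 hf] with ξ hgξ hfξ hξE
    rw [hgξ, hfξ hξE, mul_zero]

/-- Wiener's characterization: a closed subspace `V ⊆ L²(G)` of a second countable LCA
group `G` is invariant under all translations iff `V = {f : supp f̂ ⊆ E}` for some
measurable `E ⊆ Ĝ`.  The dual group and the Fourier–Plancherel transform are abstracted
as a measure space `Gh` with a separating family of unimodular characters `e x = (x, ·)`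
and an isometric isomorphism `F` turning translation by `y` into multiplication by
`(−y, ·) = conj (e y ·)`. -/
theorem translation_invariant_iff_support
    {G : Type*} [AddCommGroup G] [TopologicalSpace G] [IsTopologicalAddGroup G]
    [LocallyCompactSpace G] [SecondCountableTopology G] [MeasurableSpace G] [BorelSpace G]
    (mG : Measure G) [mG.IsAddHaarMeasure]
    {Gh : Type*} [MeasurableSpace Gh] (mGh : Measure Gh) [SigmaFinite mGh]
    (e : G → Gh → ℂ)
    (hemeas : ∀ x, Measurable (e x))
    (headd : ∀ x y ξ, e (x + y) ξ = e x ξ * e y ξ)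
    (henorm : ∀ x ξ, ‖e x ξ‖ = 1)
    -- the characters form a determining family (uniqueness of Fourier coefficients)
    (hedet : ∀ h : Gh → ℂ, Integrable h mGh →
      (∀ x : G, ∫ ξ, h ξ * e x ξ ∂mGh = 0) → h =ᵐ[mGh] 0)
    -- the Fourier–Plancherel transform
    (F : Lp ℂ 2 mG ≃ₗᵢ[ℂ] Lp ℂ 2 mGh)
    (hFtrans : ∀ y : G, ∀ f g : Lp ℂ 2 mG, (⇑g =ᵐ[mG] fun x => f (x - y)) →
      ⇑(F g) =ᵐ[mGh] fun ξ => conj (e y ξ) * (F f) ξ)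
    (V : Submodule ℂ (Lp ℂ 2 mG)) (hV : IsClosed (V : Set (Lp ℂ 2 mG))) :
    (∀ y : G, ∀ f ∈ V, ∀ g : Lp ℂ 2 mG,
        (⇑g =ᵐ[mG] fun x => f (x - y)) → g ∈ V) ↔
      ∃ E : Set Gh, MeasurableSet E ∧
        ∀ f : Lp ℂ 2 mG, f ∈ V ↔ ∀ᵐ ξ ∂mGh, ξ ∉ E → (F f) ξ = 0 :=
  translation_invariant_iff_support_general mG mGh e hemeas headd henorm hedet F hFtrans V hV
end
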